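/- Let 0 < a < b and let f : [a,b] → ℝ be continuous on [a,b] and differentiable on (a,b). Let a = x₀ < x₁ < ⋯ < xₙ = b be a partition of [a,b] with step sizes hᵢ := xᵢ₊₁ − xᵢ, and define the midpoint rule Mₙ := Σ_{i=0}^{n−1} f((xᵢ + xᵢ₊₁)/2)·hᵢ. Then the remainder Rₙ := ∫ₐᵇ f(t) dt − Mₙ satisfies |Rₙ| ≤ (‖f − ℓf′‖∞/2)·Σ_{i=0}^{n−1} hᵢ²/(xᵢ + xᵢ₊₁) ≤ (‖f − ℓf′‖∞/(4a))·Σ_{i=0}^{n−1} hᵢ². -/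

import Mathlib

/-!
Pompeiu's mean value theorem (Cauchy's mean value theorem for `f t / t` and `1 / t`) gives
`|s f(t) - t f(s)| ≤ ‖f - ℓf'‖∞ |t - s|`. On a cell with midpoint `m`, the line `t ↦ f(m) t / m`
is integrated exactly by the midpoint rule, and `f` deviates from it by at most
`‖f - ℓf'‖∞ |t - m| / m`; integrating `|t - m|` gives `h² / 4`, so the local error is at most
`‖f - ℓf'‖∞ h² / (2 (xᵢ + xᵢ₊₁))`. Summing over the cells gives the first bound, and
`xᵢ + xᵢ₊₁ ≥ 2a` the second.
-/

open Set intervalIntegral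

theorem exists_pompeiu_mean_value {f : ℝ → ℝ} {s t : ℝ} (hs : 0 < s) (hst : s < t)
    (hf : ContinuousOn f (Icc s t)) (hd : DifferentiableOn ℝ f (Ioo s t)) :
    ∃ ξ ∈ Ioo s t, s * f t - t * f s = (s - t) * (f ξ - ξ * deriv f ξ) := by
  have hne : ∀ u ∈ Icc s t, u ≠ 0 := fun u hu => (hs.trans_le hu.1).ne'
  have hne' : ∀ ξ ∈ Ioo s t, ξ ≠ 0 := fun ξ hξ => hne ξ (Ioo_subset_Icc_self hξ)
  obtain ⟨ξ, hξ, hcauchy⟩ := exists_ratio_hasDerivAt_eq_ratio_slope (fun u => f u / u)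
    (fun ξ => (deriv f ξ * ξ - f ξ * 1) / ξ ^ 2) hst (hf.div continuousOn_id hne)
    (fun ξ hξ => ((hd.differentiableAt (isOpen_Ioo.mem_nhds hξ)).hasDerivAt.div
      (hasDerivAt_id ξ) (hne' ξ hξ)))
    (fun u => u⁻¹) (fun ξ => -(ξ ^ 2)⁻¹) (continuousOn_id.inv₀ hne)
    (fun ξ hξ => hasDerivAt_inv (hne' ξ hξ))
  refine ⟨ξ, hξ, ?_⟩
  have hξ0 := hne' ξ hξ
  have ht0 := (hs.trans hst).ne'
  field_simp at hcauchy
  linear_combination hcauchy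

theorem abs_mul_sub_mul_le_of_pompeiu_bound {f : ℝ → ℝ} {a b M s t : ℝ} (ha : 0 < a)
    (hf : ContinuousOn f (Icc a b)) (hd : DifferentiableOn ℝ f (Ioo a b))
    (hM : ∀ ξ ∈ Ioo a b, |f ξ - ξ * deriv f ξ| ≤ M)
    (hs : s ∈ Icc a b) (ht : t ∈ Icc a b) :
    |s * f t - t * f s| ≤ M * |t - s| := by
  wlog hst : s < t generalizing s t
  · rcases (not_lt.1 hst).eq_or_lt with rfl | hts
    · simp
    · rw [abs_sub_comm, abs_sub_comm t]
      exact this ht hs hts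
  obtain ⟨ξ, hξ, heq⟩ := exists_pompeiu_mean_value (ha.trans_le hs.1) hst
    (hf.mono (Icc_subset_Icc hs.1 ht.2)) (hd.mono (Ioo_subset_Ioo hs.1 ht.2))
  rw [heq, abs_mul, abs_sub_comm s, mul_comm]
  exact mul_le_mul_of_nonneg_right (hM ξ (Ioo_subset_Ioo hs.1 ht.2 hξ)) (abs_nonneg _)

theorem integral_abs_sub_midpoint {u v : ℝ} (huv : u ≤ v) :
    ∫ t in u..v, |t - (u + v) / 2| = (v - u) ^ 2 / 4 := by
  set m := (u + v) / 2 with hm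
  have hum : u ≤ m := by linarith
  have hmv : m ≤ v := by linarith
  have hcont : Continuous fun t : ℝ => |t - m| := by fun_prop
  have hleft : ∫ t in u..m, |t - m| = ∫ t in u..m, (m - t) :=
    integral_congr fun t ht => by
      rw [uIcc_of_le hum] at ht
      simp only [abs_of_nonpos (sub_nonpos.2 ht.2), neg_sub]
  have hright : ∫ t in m..v, |t - m| = ∫ t in m..v, (t - m) :=
    integral_congr fun t ht => by
      rw [uIcc_of_le hmv] at ht
      simp only [abs_of_nonneg (sub_nonneg.2 ht.1)]
  rw [← integral_add_adjacent_intervals (hcont.intervalIntegrable u m)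
    (hcont.intervalIntegrable m v), hleft, hright, integral_sub intervalIntegrable_const
    intervalIntegrable_id, integral_sub intervalIntegrable_id intervalIntegrable_const]
  simp only [integral_id, integral_const, smul_eq_mul, m]
  ring

theorem abs_integral_sub_midpoint_le {f : ℝ → ℝ} {u v M : ℝ} (hu : 0 < u) (huv : u ≤ v)
    (hf : ContinuousOn f (Icc u v)) (hd : DifferentiableOn ℝ f (Ioo u v))
    (hM : ∀ ξ ∈ Ioo u v, |f ξ - ξ * deriv f ξ| ≤ M) :
    |(∫ t in u..v, f t) - f ((u + v) / 2) * (v - u)| ≤ M / 2 * ((v - u) ^ 2 / (u + v)) := by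
  set m := (u + v) / 2 with hm_def
  have hm : m ∈ Icc u v := ⟨by linarith, by linarith⟩
  have hm0 : 0 < m := by linarith
  have hf_int : IntervalIntegrable f MeasureTheory.volume u v := hf.intervalIntegrable_of_Icc huv
  have hchord : (∫ t in u..v, f t) - f m * (v - u) = ∫ t in u..v, (f t - f m / m * t) := by
    rw [integral_sub hf_int (intervalIntegrable_id.const_mul _), integral_const_mul, integral_id]
    field_simp
    ring
  have hpointwise : ∀ t ∈ Ioc u v, ‖f t - f m / m * t‖ ≤ M / m * |t - m| := by
    intro t ht
    have h := abs_mul_sub_mul_le_of_pompeiu_bound hu hf hd hM hm (Ioc_subset_Icc_self ht)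
    rw [Real.norm_eq_abs, show f t - f m / m * t = (m * f t - t * f m) / m by field_simp,
      abs_div, abs_of_pos hm0, div_le_iff₀ hm0]
    calc |m * f t - t * f m| ≤ M * |t - m| := h
      _ = M / m * |t - m| * m := by field_simp
  rw [hchord]
  calc |∫ t in u..v, (f t - f m / m * t)|
      ≤ ∫ t in u..v, M / m * |t - m| :=
        norm_integral_le_of_norm_le huv (Filter.Eventually.of_forall hpointwise)
          (by apply Continuous.intervalIntegrable; fun_prop)
    _ = M / 2 * ((v - u) ^ 2 / (u + v)) := by
      rw [integral_const_mul, integral_abs_sub_midpoint huv, hm_def]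
      field_simp
      ring

theorem abs_integral_sub_sum_le_sum_abs {f : ℝ → ℝ} {x : ℕ → ℝ} {n : ℕ} (g : ℕ → ℝ)
    (hint : ∀ k < n, IntervalIntegrable f MeasureTheory.volume (x k) (x (k + 1))) :
    |(∫ t in x 0..x n, f t) - ∑ i ∈ Finset.range n, g i| ≤
      ∑ i ∈ Finset.range n, |(∫ t in x i..x (i + 1), f t) - g i| := by
  rw [← sum_integral_adjacent_intervals hint, ← Finset.sum_sub_distrib]
  exact Finset.abs_sum_le_sum_abs _ _

theorem pompeiu_midpoint_rule_general (a b : ℝ) (f : ℝ → ℝ)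
    (ha : 0 < a)
    (hf : ContinuousOn f (Set.Icc a b))
    (hd : DifferentiableOn ℝ f (Set.Ioo a b))
    (hbdd : BddAbove ((fun ξ => |f ξ - ξ * deriv f ξ|) '' Set.Ioo a b))
    (n : ℕ) (x : ℕ → ℝ)
    (hx0 : x 0 = a) (hxn : x n = b)
    (hmono : ∀ i < n, x i < x (i + 1)) :
    |(∫ t in a..b, f t) -
        ∑ i ∈ Finset.range n, f ((x i + x (i + 1)) / 2) * (x (i + 1) - x i)| ≤
      sSup ((fun ξ => |f ξ - ξ * deriv f ξ|) '' Set.Ioo a b) / 2 *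
        ∑ i ∈ Finset.range n, (x (i + 1) - x i) ^ 2 / (x i + x (i + 1)) ∧
    sSup ((fun ξ => |f ξ - ξ * deriv f ξ|) '' Set.Ioo a b) / 2 *
        ∑ i ∈ Finset.range n, (x (i + 1) - x i) ^ 2 / (x i + x (i + 1)) ≤
      sSup ((fun ξ => |f ξ - ξ * deriv f ξ|) '' Set.Ioo a b) / (4 * a) *
        ∑ i ∈ Finset.range n, (x (i + 1) - x i) ^ 2 := by
  set M := sSup ((fun ξ => |f ξ - ξ * deriv f ξ|) '' Set.Ioo a b)
  have hM : ∀ ξ ∈ Ioo a b, |f ξ - ξ * deriv f ξ| ≤ M := fun ξ hξ =>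
    le_csSup hbdd (mem_image_of_mem _ hξ)
  have hM0 : 0 ≤ M := Real.sSup_nonneg (by rintro _ ⟨ξ, -, rfl⟩; exact abs_nonneg _)
  have hbounds : ∀ i < n, a ≤ x i ∧ x (i + 1) ≤ b := fun i hi => by
    have hxmono := (strictMonoOn_Iic_of_lt_succ hmono).monotoneOn
    rw [← hx0, ← hxn]
    exact ⟨hxmono (Nat.zero_le n) hi.le (Nat.zero_le i), hxmono hi (le_refl n) hi⟩
  have hsub : ∀ i < n, Icc (x i) (x (i + 1)) ⊆ Icc a b := fun i hi =>
    Icc_subset_Icc (hbounds i hi).1 (hbounds i hi).2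
  constructor
  · rw [← hx0, ← hxn, Finset.mul_sum]
    refine (abs_integral_sub_sum_le_sum_abs _ fun i hi => ?_).trans
      (Finset.sum_le_sum fun i hi => ?_)
    · exact (hf.mono (hsub i hi)).intervalIntegrable_of_Icc (hmono i hi).le
    · rw [Finset.mem_range] at hi
      have hsub' := Ioo_subset_Ioo (hbounds i hi).1 (hbounds i hi).2
      exact abs_integral_sub_midpoint_le (ha.trans_le (hbounds i hi).1) (hmono i hi).le
        (hf.mono (hsub i hi)) (hd.mono hsub') fun ξ hξ => hM ξ (hsub' hξ)
  · rw [Finset.mul_sum, Finset.mul_sum]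
    refine Finset.sum_le_sum fun i hi => ?_
    rw [Finset.mem_range] at hi
    have hsum : 2 * a ≤ x i + x (i + 1) := by linarith [(hbounds i hi).1, hmono i hi]
    calc M / 2 * ((x (i + 1) - x i) ^ 2 / (x i + x (i + 1)))
        ≤ M / 2 * ((x (i + 1) - x i) ^ 2 / (2 * a)) := by gcongr
      _ = M / (4 * a) * (x (i + 1) - x i) ^ 2 := by field_simp; ring

/-- Corollary 5.2: error estimate for the midpoint rule built on Pompeiu's inequality. -/
theorem pompeiu_midpoint_rule (a b : ℝ) (f : ℝ → ℝ)
    (ha : 0 < a) (hab : a < b)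
    (hf : ContinuousOn f (Set.Icc a b))
    (hd : DifferentiableOn ℝ f (Set.Ioo a b))
    (hbdd : BddAbove ((fun ξ => |f ξ - ξ * deriv f ξ|) '' Set.Ioo a b))
    (n : ℕ) (x : ℕ → ℝ)
    (hx0 : x 0 = a) (hxn : x n = b)
    (hmono : ∀ i < n, x i < x (i + 1)) :
    |(∫ t in a..b, f t) -
        ∑ i ∈ Finset.range n, f ((x i + x (i + 1)) / 2) * (x (i + 1) - x i)| ≤
      sSup ((fun ξ => |f ξ - ξ * deriv f ξ|) '' Set.Ioo a b) / 2 *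
        ∑ i ∈ Finset.range n, (x (i + 1) - x i) ^ 2 / (x i + x (i + 1)) ∧
    sSup ((fun ξ => |f ξ - ξ * deriv f ξ|) '' Set.Ioo a b) / 2 *
        ∑ i ∈ Finset.range n, (x (i + 1) - x i) ^ 2 / (x i + x (i + 1)) ≤
      sSup ((fun ξ => |f ξ - ξ * deriv f ξ|) '' Set.Ioo a b) / (4 * a) *
        ∑ i ∈ Finset.range n, (x (i + 1) - x i) ^ 2 :=
  pompeiu_midpoint_rule_general a b f ha hf hd hbdd n x hx0 hxn hmono
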